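/- For all natural numbers n ≥ k ≥ 1, if m = R_1(n,n,k) is the diagonal triangular Ramsey number, then (m+1)^{2T_n} ≥ sqrt(2πT_n)·(T_n/e)^{T_n}·2^{(n/k)^k + T_n - 1}, and hence m > (2πT_n)^{1/(4T_n)}·sqrt(2T_n/e)·2^{(n^k - k^k)/(2 k^k T_n)} - 1, where T_n = n(n+1)/2. -/

import Mathlib

/-- The `n`-th triangular number. -/
def T (n : ℕ) : ℕ := n * (n + 1) / 2

/-- The bracket numbers, defined by the recursion
`[n, k] = [n-1, k] + C(n,k) * [n-1, k-1]` with `[n, 0] = 1` and `[n, n] = 1`. -/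
def brack : ℕ → ℕ → ℕ
  | _, 0 => 1
  | 0, _ + 1 => 0
  | n + 1, k + 1 =>
    if n + 1 = k + 1 then 1
    else brack n (k + 1) + Nat.choose (n + 1) (k + 1) * brack n k

/-- A `△_n` on the triangular board with `m` levels (positions are labeled `1, …, T m`
row by row, row `r` being the labels in `(T (r-1), T r]`): a selection of `n` rows in
increasing order together with `j + 1` positions from the `j`-th selected row. -/
structure BTri (m n : ℕ) where
  row : Fin n → ℕ
  mono : StrictMono row
  row_pos : ∀ j, 1 ≤ row j
  row_le : ∀ j, row j ≤ m
  cells : Fin n → Finset ℕ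
  card_cells : ∀ j, (cells j).card = (j : ℕ) + 1
  cells_mem : ∀ j, cells j ⊆ Finset.Ioc (T (row j - 1)) (T (row j))

/-- The set of positions of a `△_n` on the board. -/
def BTri.toSet {m n : ℕ} (Z : BTri m n) : Finset ℕ := Finset.univ.biUnion Z.cells

/-- `S ≤ Z`: the `△_k` `S` is contained in the `△_n` `Z` in the level-respecting order,
i.e. each level of `S` is contained in a single distinct level of `Z`, in increasing order. -/
def BTri.le {m k n : ℕ} (S : BTri m k) (Z : BTri m n) : Prop :=
  ∃ e : Fin k → Fin n, StrictMono e ∧ ∀ j, S.cells j ⊆ Z.cells (e j)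

/-- The triangular Ramsey number `R₁(p, q, k)`: the least `m ≥ max p q` such that every
two-coloring of the `△_k`'s on the board with `m` levels contains a `△_p` all of whose
`△_k`'s are in color one, or a `△_q` all of whose `△_k`'s are in color two. -/
noncomputable def R1 (p q k : ℕ) : ℕ :=
  sInf {m | max p q ≤ m ∧ ∀ χ : Finset ℕ → Bool,
    (∃ Z : BTri m p, ∀ S : BTri m k, S.le Z → χ S.toSet = true) ∨
    (∃ Z : BTri m q, ∀ S : BTri m k, S.le Z → χ S.toSet = false)}

open Finset Real
open scoped Nat

/-!
At `m = R₁(n, n, k)` every two-colouring of the position sets inside the board has a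
monochromatic `△_n`. A `△_n` contains at least `C(n, k)` distinct `△_k`'s, so a uniformly random
colouring makes a given one monochromatic with probability at most `2 ^ (1 - C(n, k))`; as there
are at most `C(T m, T n)` of them, `2 ^ (C(n, k) - 1) ≤ C(T m, T n) ≤ (T m) ^ (T n) / (T n)!`.
Stirling's bound for `(T n)!`, `T m < (m + 1) ^ 2 / 2` and `(n / k) ^ k ≤ C(n, k)` finish.

This needs the set whose `sInf` defines `R₁` to be nonempty, which is a Ramsey theorem for
triangles. Cut a finite set of naturals, in increasing order, into blocks of sizes
`2, 3, …`; the largest element of a block names a row and the others name cells in that row.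
Colour each set by the colour of the `△_k` its first `k` blocks encode; the blocks of a large
homogeneous set (Ramsey's theorem for sets) form a `△_n`, and each `△_k` inside it is encoded
by a subset of the homogeneous set.
-/

lemma T_mul_two (r : ℕ) : T r * 2 = r * (r + 1) :=
  Nat.div_mul_cancel (Nat.even_mul_succ_self r).two_dvd

lemma T_succ (r : ℕ) : T (r + 1) = T r + (r + 1) := by
  apply Nat.eq_of_mul_eq_mul_right two_pos
  rw [add_mul, T_mul_two, T_mul_two]
  ring

lemma T_mono : Monotone T :=
  monotone_nat_of_le_succ fun r => by rw [T_succ]; omega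

lemma T_pos {n : ℕ} (hn : 0 < n) : 0 < T n :=
  Nat.pos_of_mul_pos_right (T_mul_two n ▸ Nat.mul_pos hn n.succ_pos)

lemma sum_range_add_one_eq_T (n : ℕ) : ∑ i ∈ range n, (i + 1) = T n := by
  apply Nat.eq_of_mul_eq_mul_right two_pos
  have h := sum_range_succ' (fun i => i) n
  simp only [add_zero] at h
  rw [← h, sum_range_id_mul_two, T_mul_two, Nat.add_sub_cancel, mul_comm]

lemma disjoint_Ioc_T {a b : ℕ} (h : a ≠ b) :
    Disjoint (Ioc (T (a - 1)) (T a)) (Ioc (T (b - 1)) (T b)) := by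
  wlog hab : a < b generalizing a b
  · exact (this h.symm (by omega)).symm
  have := T_mono (show a ≤ b - 1 by omega)
  rw [disjoint_left]
  intro p hpa hpb
  rw [mem_Ioc] at hpa hpb
  omega

lemma Fin.val_le_orderEmbedding_apply {k n : ℕ} (e : Fin k ↪o Fin n) (t : Fin k) :
    (t : ℕ) ≤ e t := by
  have h := card_le_card_of_injOn e (s := Iic t) (t := Iic (e t))
    (fun x hx => by simpa using hx) e.injective.injOn
  simpa [Fin.card_Iic] using h

namespace BTri

variable {m m' n k : ℕ}

lemma cells_nonempty (Z : BTri m n) (j : Fin n) : (Z.cells j).Nonempty :=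
  card_pos.1 (by rw [Z.card_cells]; omega)

lemma row_eq_of_mem_cells {S : BTri m' k} {Z : BTri m n} {t : Fin k} {j : Fin n} {p : ℕ}
    (hS : p ∈ S.cells t) (hZ : p ∈ Z.cells j) : Z.row j = S.row t := by
  by_contra h
  exact disjoint_left.1 (disjoint_Ioc_T h) (Z.cells_mem j hZ) (S.cells_mem t hS)

lemma cells_disjoint (Z : BTri m n) {i j : Fin n} (h : i ≠ j) :
    Disjoint (Z.cells i) (Z.cells j) :=
  (disjoint_Ioc_T (Z.mono.injective.ne h)).mono (Z.cells_mem i) (Z.cells_mem j)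

lemma mem_toSet {Z : BTri m n} {p : ℕ} : p ∈ Z.toSet ↔ ∃ j, p ∈ Z.cells j := by
  simp [toSet]

lemma card_toSet (Z : BTri m n) : #Z.toSet = T n := by
  rw [toSet, card_biUnion fun i _ j _ h => Z.cells_disjoint h]
  simp only [Z.card_cells]
  rw [Fin.sum_univ_eq_sum_range (· + 1), sum_range_add_one_eq_T]

lemma toSet_subset (Z : BTri m n) : Z.toSet ⊆ Ioc 0 (T m) := by
  intro p hp
  obtain ⟨j, hj⟩ := mem_toSet.1 hp
  have hp' := Z.cells_mem j hj
  have := T_mono (Z.row_le j)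
  rw [mem_Ioc] at hp' ⊢
  omega

lemma le_of_toSet_subset {S : BTri m k} {Z : BTri m n} (h : S.toSet ⊆ Z.toSet) : S.le Z := by
  have hrow : ∀ t, ∃ j, Z.row j = S.row t := fun t => by
    obtain ⟨p, hp⟩ := S.cells_nonempty t
    obtain ⟨j, hj⟩ := mem_toSet.1 (h (mem_toSet.2 ⟨t, hp⟩))
    exact ⟨j, row_eq_of_mem_cells hp hj⟩
  choose e he using hrow
  refine ⟨e, fun a b hab => Z.mono.lt_iff_lt.1 (by rw [he, he]; exact S.mono hab), ?_⟩
  intro t p hp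
  obtain ⟨j, hj⟩ := mem_toSet.1 (h (mem_toSet.2 ⟨t, hp⟩))
  rwa [← Z.mono.injective ((row_eq_of_mem_cells hp hj).trans (he t).symm)]

lemma exists_cells_subset (Z : BTri m n) (e : Fin k ↪o Fin n) :
    ∃ S : BTri m k, ∀ t, S.cells t ⊆ Z.cells (e t) := by
  choose C hC hcard using fun t : Fin k => exists_subset_card_eq (s := Z.cells (e t))
    (n := t + 1) (by
      rw [Z.card_cells]; exact Nat.succ_le_succ (Fin.val_le_orderEmbedding_apply e t))
  exact ⟨⟨Z.row ∘ e, Z.mono.comp e.strictMono, fun _ => Z.row_pos _, fun _ => Z.row_le _, C,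
    hcard, fun t => (hC t).trans (Z.cells_mem _)⟩, hC⟩

lemma inter_cells_nonempty_iff {S : BTri m k} {Z : BTri m n} {e : Fin k → Fin n}
    (hS : ∀ t, S.cells t ⊆ Z.cells (e t)) (j : Fin n) :
    (S.toSet ∩ Z.cells j).Nonempty ↔ j ∈ Set.range e := by
  constructor
  · rintro ⟨p, hp⟩
    obtain ⟨t, ht⟩ := mem_toSet.1 (mem_inter.1 hp).1
    refine ⟨t, by_contra fun h => ?_⟩
    exact disjoint_left.1 (Z.cells_disjoint h) (hS t ht) (mem_inter.1 hp).2
  · rintro ⟨t, rfl⟩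
    obtain ⟨p, hp⟩ := S.cells_nonempty t
    exact ⟨p, mem_inter.2 ⟨mem_toSet.2 ⟨t, hp⟩, hS t hp⟩⟩

end BTri

open scoped Classical in
noncomputable def subtriangleSets (m k : ℕ) (A : Finset ℕ) : Finset (Finset ℕ) :=
  A.powerset.filter fun B => ∃ S : BTri m k, S.toSet = B

lemma choose_le_card_subtriangleSets {m n : ℕ} (Z : BTri m n) (k : ℕ) :
    n.choose k ≤ #(subtriangleSets m k Z.toSet) := by
  classical
  have hS (E : Finset (Fin n)) (hE : #E = k) := Z.exists_cells_subset (E.orderEmbOfFin hE)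
  let F : Finset (Fin n) → Finset ℕ := fun E =>
    if hE : #E = k then (hS E hE).choose.toSet else ∅
  have hF (E : Finset (Fin n)) (hE : #E = k) : F E ∈ subtriangleSets m k Z.toSet ∧
      ∀ j, (F E ∩ Z.cells j).Nonempty ↔ j ∈ E := by
    have hsub := (hS E hE).choose_spec
    simp only [F, dif_pos hE, subtriangleSets, mem_filter, mem_powerset]
    refine ⟨⟨fun p hp => ?_, _, rfl⟩, fun j => ?_⟩
    · obtain ⟨t, ht⟩ := BTri.mem_toSet.1 hp
      exact BTri.mem_toSet.2 ⟨_, hsub t ht⟩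
    · rw [BTri.inter_cells_nonempty_iff hsub, range_orderEmbOfFin]
      rfl
  calc n.choose k = #(univ.powersetCard k : Finset (Finset (Fin n))) := by simp
    _ ≤ _ := card_le_card_of_injOn F (fun E hE => (hF E (mem_powersetCard.1 hE).2).1)
      fun E₁ hE₁ E₂ hE₂ h => ext fun j => by
        rw [← (hF E₁ (mem_powersetCard.1 hE₁).2).2, ← (hF E₂ (mem_powersetCard.1 hE₂).2).2, h]

-- Union bound over the colourings of `U`, a colouring being given by its class `𝒞 ⊆ U` of colour
-- `true`: each `P ∈ ℱ` is monochromatic for at most `2 * 2 ^ (#U - c)` of the `2 ^ #U` colourings.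
theorem two_pow_pred_le_card_of_forall_subset_or_disjoint {α : Type*} [DecidableEq α]
    {U : Finset α} {ℱ : Finset (Finset α)} {c : ℕ} (hc : c ≠ 0)
    (hℱ : ∀ P ∈ ℱ, P ⊆ U ∧ c ≤ #P) (hmono : ∀ 𝒞 ⊆ U, ∃ P ∈ ℱ, P ⊆ 𝒞 ∨ Disjoint P 𝒞) :
    2 ^ (c - 1) ≤ #ℱ := by
  have hcover : U.powerset ⊆ ℱ.biUnion fun P => Icc P U ∪ (U \ P).powerset := by
    intro 𝒞 h𝒞
    rw [mem_powerset] at h𝒞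
    obtain ⟨P, hP, h⟩ := hmono 𝒞 h𝒞
    refine mem_biUnion.2 ⟨P, hP, ?_⟩
    rcases h with h | h
    · exact mem_union_left _ (mem_Icc.2 ⟨h, h𝒞⟩)
    · exact mem_union_right _ (mem_powerset.2 (subset_sdiff.2 ⟨h𝒞, h.symm⟩))
  have hcU : c ≤ #U := by
    obtain ⟨P, hP, -⟩ := hmono ∅ (empty_subset _)
    exact (hℱ P hP).2.trans (card_le_card (hℱ P hP).1)
  have hevent : ∀ P ∈ ℱ, #(Icc P U ∪ (U \ P).powerset) ≤ 2 * 2 ^ (#U - c) := fun P hP => by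
    obtain ⟨hPU, hcP⟩ := hℱ P hP
    have : 2 ^ (#U - #P) ≤ 2 ^ (#U - c) := Nat.pow_le_pow_right two_pos (by omega)
    calc _ ≤ #(Icc P U) + #(U \ P).powerset := card_union_le _ _
      _ = 2 ^ (#U - #P) + 2 ^ (#U - #P) := by
        rw [card_Icc_finset hPU, card_powerset, card_sdiff_of_subset hPU]
      _ ≤ _ := by omega
  have hunion : 2 ^ (c - 1) * (2 * 2 ^ (#U - c)) ≤ #ℱ * (2 * 2 ^ (#U - c)) :=
    calc 2 ^ (c - 1) * (2 * 2 ^ (#U - c)) = #U.powerset := by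
          rw [card_powerset, ← pow_succ', ← pow_add]; congr 1; omega
      _ ≤ ∑ P ∈ ℱ, #(Icc P U ∪ (U \ P).powerset) := (card_le_card hcover).trans card_biUnion_le
      _ ≤ _ := (sum_le_sum hevent).trans_eq (by rw [sum_const, smul_eq_mul])
  exact Nat.le_of_mul_le_mul_right hunion (by positivity)

/-- `BoardArrows m n k` is the arrow relation `m → (n)^k_2` for triangular boards. -/
def BoardArrows (m n k : ℕ) : Prop :=
  ∀ χ : Finset ℕ → Bool,
    (∃ Z : BTri m n, ∀ S : BTri m k, S.le Z → χ S.toSet = true) ∨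
    (∃ Z : BTri m n, ∀ S : BTri m k, S.le Z → χ S.toSet = false)

theorem BoardArrows.two_pow_choose_pred_le_choose {m n k : ℕ} (h : BoardArrows m n k)
    (hkn : k ≤ n) : 2 ^ (n.choose k - 1) ≤ (T m).choose (T n) := by
  classical
  let 𝒵 := ((Ioc 0 (T m)).powersetCard (T n)).filter fun A => ∃ Z : BTri m n, Z.toSet = A
  have h𝒵 (Z : BTri m n) : Z.toSet ∈ 𝒵 :=
    mem_filter.2 ⟨mem_powersetCard.2 ⟨Z.toSet_subset, Z.card_toSet⟩, Z, rfl⟩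
  calc 2 ^ (n.choose k - 1) ≤ #(𝒵.image (subtriangleSets m k)) := by
        refine two_pow_pred_le_card_of_forall_subset_or_disjoint (U := (Ioc 0 (T m)).powerset)
          (Nat.choose_pos hkn).ne' ?_ ?_
        · simp only [mem_image, 𝒵, mem_filter]
          rintro _ ⟨_, ⟨-, Z, rfl⟩, rfl⟩
          refine ⟨fun B hB => ?_, choose_le_card_subtriangleSets Z k⟩
          exact mem_powerset.2 ((mem_powerset.1 (mem_filter.1 hB).1).trans Z.toSet_subset)
        · rintro 𝒞 -
          have hcol (Z : BTri m n) (b : Bool)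
              (hZ : ∀ S : BTri m k, S.le Z → decide (S.toSet ∈ 𝒞) = b) :
              ∀ B ∈ subtriangleSets m k Z.toSet, decide (B ∈ 𝒞) = b := by
            intro B hB
            obtain ⟨hBZ, S, rfl⟩ := mem_filter.1 hB
            exact hZ S (BTri.le_of_toSet_subset (mem_powerset.1 hBZ))
          rcases h fun A => decide (A ∈ 𝒞) with ⟨Z, hZ⟩ | ⟨Z, hZ⟩
          · exact ⟨_, mem_image_of_mem _ (h𝒵 Z), Or.inl fun B hB => by
              simpa using hcol Z true hZ B hB⟩
          · exact ⟨_, mem_image_of_mem _ (h𝒵 Z), Or.inr <| disjoint_left.2 fun B hB => by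
              simpa using hcol Z false hZ B hB⟩
    _ ≤ #𝒵 := card_image_le
    _ ≤ (T m).choose (T n) := (card_filter_le _ _).trans (by simp)

def IsHomogeneous {γ : Type*} (f : Finset ℕ → γ) (u : ℕ) (W : Finset ℕ) : Prop :=
  ∀ A ⊆ W, ∀ B ⊆ W, #A = u → #B = u → f A = f B

lemma exists_min_determined {γ : Type*} {u : ℕ}
    (hu : ∀ s, ∃ N, ∀ (f : Finset ℕ → γ) (V : Finset ℕ), N ≤ #V →
      ∃ W ⊆ V, s ≤ #W ∧ IsHomogeneous f u W) (L : ℕ) :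
    ∃ N, ∀ (f : Finset ℕ → γ) (V : Finset ℕ), N ≤ #V → ∃ W ⊆ V, #W = L ∧
      ∃ c : ℕ → γ, ∀ A ⊆ W, #A = u + 1 → ∀ hA : A.Nonempty, f A = c (A.min' hA) := by
  classical
  induction L with
  | zero =>
    refine ⟨0, fun f V _ => ⟨∅, empty_subset _, rfl, fun _ => f ∅, fun A hA hAc => ?_⟩⟩
    simp [subset_empty.1 hA] at hAc
  | succ L ih =>
    obtain ⟨N₁, h₁⟩ := ih
    obtain ⟨N₂, h₂⟩ := hu N₁
    refine ⟨N₂ + 1, fun f V hV => ?_⟩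
    have hVne : V.Nonempty := card_pos.1 (by omega)
    set x := V.min' hVne
    have hxV : x ∈ V := V.min'_mem hVne
    obtain ⟨U, hUV, hUcard, hU⟩ := h₂ (fun A => f (insert x A)) (V.erase x)
      (by rw [card_erase_of_mem hxV]; omega)
    obtain ⟨W, hWU, hWcard, c, hc⟩ := h₁ f U hUcard
    have hWV : W ⊆ V.erase x := hWU.trans hUV
    let cx : γ := if h : ∃ B ⊆ U, #B = u then f (insert x h.choose) else f ∅
    have hcx : ∀ B ⊆ U, #B = u → f (insert x B) = cx := fun B hB hBc => by
      have h : ∃ B ⊆ U, #B = u := ⟨B, hB, hBc⟩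
      simp only [cx, dif_pos h]
      exact hU B hB h.choose h.choose_spec.1 hBc h.choose_spec.2
    refine ⟨insert x W, insert_subset hxV (hWV.trans (erase_subset _ _)), ?_,
      Function.update c x cx, fun A hA hAc hAne => ?_⟩
    · rw [card_insert_of_notMem fun hx => notMem_erase x V (hWV hx), hWcard]
    by_cases hxA : x ∈ A
    · have hmin : A.min' hAne = x := le_antisymm (A.min'_le x hxA) <|
        A.le_min' hAne x fun y hy => V.min'_le y <| by
          rcases mem_insert.1 (hA hy) with rfl | hy
          exacts [hxV, mem_of_mem_erase (hWV hy)]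
      calc f A = f (insert x (A.erase x)) := by rw [insert_erase hxA]
        _ = cx := hcx _ (((erase_subset_erase x hA).trans (erase_insert_subset x W)).trans hWU)
            (by rw [card_erase_of_mem hxA, hAc]; rfl)
        _ = _ := by rw [hmin, Function.update_self]
    · have hAW : A ⊆ W := fun y hy =>
        (mem_insert.1 (hA hy)).resolve_left (by rintro rfl; exact hxA hy)
      have hne : A.min' hAne ≠ x := fun h => hxA (h ▸ A.min'_mem hAne)
      rw [Function.update_of_ne hne, hc A hAW hAc hAne]

theorem exists_isHomogeneous (γ : Type*) [Fintype γ] (u s : ℕ) :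
    ∃ N, ∀ (f : Finset ℕ → γ) (V : Finset ℕ), N ≤ #V → ∃ W ⊆ V, s ≤ #W ∧ IsHomogeneous f u W := by
  induction u generalizing s with
  | zero =>
    refine ⟨s, fun f V hV => ?_⟩
    obtain ⟨W, hWV, hW⟩ := exists_subset_card_eq hV
    exact ⟨W, hWV, hW.ge, fun A _ B _ hA hB => by rw [card_eq_zero.1 hA, card_eq_zero.1 hB]⟩
  | succ u ih =>
    classical
    obtain ⟨N, hN⟩ := exists_min_determined ih (Fintype.card γ * s + 1)
    refine ⟨N, fun f V hV => ?_⟩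
    obtain ⟨W, hWV, hWcard, c, hc⟩ := hN f V hV
    obtain ⟨v, -, hv⟩ := exists_lt_card_fiber_of_mul_lt_card_of_maps_to (s := W) (t := univ)
      (f := c) (n := s) (fun _ _ => mem_univ _) (by rw [card_univ, hWcard]; omega)
    have hval : ∀ A ⊆ W.filter (c · = v), #A = u + 1 → f A = v := fun A hA hAc => by
      have hAne : A.Nonempty := card_pos.1 (by omega)
      rw [hc A (hA.trans (filter_subset _ _)) hAc hAne]
      exact (mem_filter.1 (hA (A.min'_mem hAne))).2
    exact ⟨_, (filter_subset _ _).trans hWV, hv.le, fun A hA B hB hAc hBc =>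
      (hval A hA hAc).trans (hval B hB hBc).symm⟩

def rankIn (A : Finset ℕ) (x : ℕ) : ℕ := #{y ∈ A | y < x}

def blockStart (t : ℕ) : ℕ := ∑ i ∈ range t, (i + 2)

def block (A : Finset ℕ) (t : ℕ) : Finset ℕ :=
  {x ∈ A | rankIn A x ∈ Ico (blockStart t) (blockStart (t + 1))}

lemma rankIn_mono (A : Finset ℕ) : Monotone (rankIn A) := fun _ _ hxy =>
  card_le_card <| monotone_filter_right _ fun _ _ hy => hy.trans_le hxy

lemma rankIn_lt_rankIn {A : Finset ℕ} {x y : ℕ} (hx : x ∈ A) (hxy : x < y) :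
    rankIn A x < rankIn A y :=
  card_lt_card <| (ssubset_iff_of_subset (monotone_filter_right _ fun _ _ h => h.trans hxy)).2
    ⟨x, mem_filter.2 ⟨hx, hxy⟩, fun h => (mem_filter.1 h).2.false⟩

lemma rankIn_injOn (A : Finset ℕ) : Set.InjOn (rankIn A) A := fun x hx y hy h => by
  by_contra hne
  rcases Nat.lt_or_gt_of_ne hne with hlt | hlt
  · exact (rankIn_lt_rankIn hx hlt).ne h
  · exact (rankIn_lt_rankIn hy hlt).ne' h

lemma image_rankIn (A : Finset ℕ) : A.image (rankIn A) = range #A := by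
  refine eq_of_subset_of_card_le (fun r hr => ?_) ?_
  · obtain ⟨x, hx, rfl⟩ := mem_image.1 hr
    exact mem_range.2 <| card_lt_card <| filter_ssubset.2 ⟨x, hx, lt_irrefl x⟩
  · rw [card_range, card_image_of_injOn (rankIn_injOn A)]

lemma blockStart_succ (t : ℕ) : blockStart (t + 1) = blockStart t + (t + 2) :=
  sum_range_succ _ _

lemma blockStart_strictMono : StrictMono blockStart :=
  strictMono_nat_of_lt_succ fun t => by rw [blockStart_succ]; omega

lemma eq_of_mem_Ico_blockStart {r i j : ℕ} (hi : r ∈ Ico (blockStart i) (blockStart (i + 1)))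
    (hj : r ∈ Ico (blockStart j) (blockStart (j + 1))) : i = j := by
  rw [mem_Ico] at hi hj
  by_contra hne
  rcases Nat.lt_or_gt_of_ne hne with h | h
  · have := blockStart_strictMono.monotone (show i + 1 ≤ j by omega); omega
  · have := blockStart_strictMono.monotone (show j + 1 ≤ i by omega); omega

structure IsOrderedBlocks (k : ℕ) (G : ℕ → Finset ℕ) : Prop where
  card_eq : ∀ t < k, #(G t) = t + 2
  lt_of_lt : ∀ {i j}, i < j → j < k → ∀ x ∈ G i, ∀ y ∈ G j, x < y

namespace IsOrderedBlocks

variable {k : ℕ} {G : ℕ → Finset ℕ}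

lemma mono (h : IsOrderedBlocks k G) {k' : ℕ} (hk : k' ≤ k) : IsOrderedBlocks k' G :=
  ⟨fun t ht => h.card_eq t (by omega), fun hij hj => h.lt_of_lt hij (by omega)⟩

lemma card_biUnion (h : IsOrderedBlocks k G) : #((range k).biUnion G) = blockStart k := by
  rw [Finset.card_biUnion]
  · exact sum_congr rfl fun t ht => h.card_eq t (mem_range.1 ht)
  · intro i hi j hj hij
    rw [Function.onFun, disjoint_left]
    intro x hxi hxj
    rcases Nat.lt_or_gt_of_ne hij with hlt | hlt
    · exact (h.lt_of_lt hlt (mem_range.1 hj) x hxi x hxj).false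
    · exact (h.lt_of_lt hlt (mem_range.1 hi) x hxj x hxi).false

lemma rankIn_mem_Ico (h : IsOrderedBlocks k G) {t x : ℕ} (ht : t < k) (hx : x ∈ G t) :
    rankIn ((range k).biUnion G) x ∈ Ico (blockStart t) (blockStart (t + 1)) := by
  have hsplit : {y ∈ (range k).biUnion G | y < x} = (range t).biUnion G ∪ {y ∈ G t | y < x} := by
    ext y
    simp only [mem_filter, mem_biUnion, mem_range, mem_union]
    constructor
    · rintro ⟨⟨i, hi, hy⟩, hyx⟩
      rcases lt_trichotomy i t with hit | rfl | hti
      · exact Or.inl ⟨i, hit, hy⟩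
      · exact Or.inr ⟨hy, hyx⟩
      · exact absurd (h.lt_of_lt hti hi x hx y hy) (not_lt.2 hyx.le)
    · rintro (⟨i, hit, hy⟩ | ⟨hy, hyx⟩)
      · exact ⟨⟨i, by omega, hy⟩, h.lt_of_lt hit ht y hy x hx⟩
      · exact ⟨⟨t, ht, hy⟩, hyx⟩
  have hdisj : Disjoint ((range t).biUnion G) {y ∈ G t | y < x} := by
    rw [disjoint_left]
    intro y hy hy'
    obtain ⟨i, hi, hyi⟩ := mem_biUnion.1 hy
    exact (h.lt_of_lt (mem_range.1 hi) ht y hyi y (mem_filter.1 hy').1).false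
  have hlt : #{y ∈ G t | y < x} < t + 2 :=
    h.card_eq t ht ▸ card_lt_card (filter_ssubset.2 ⟨x, hx, lt_irrefl x⟩)
  rw [rankIn, hsplit, card_union_of_disjoint hdisj, (h.mono ht.le).card_biUnion, mem_Ico,
    blockStart_succ]
  omega

lemma block_biUnion (h : IsOrderedBlocks k G) {t : ℕ} (ht : t < k) :
    block ((range k).biUnion G) t = G t := by
  ext x
  refine ⟨fun hx => ?_, fun hx => mem_filter.2 ⟨mem_biUnion.2 ⟨t, mem_range.2 ht, hx⟩,
    h.rankIn_mem_Ico ht hx⟩⟩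
  obtain ⟨hxA, hrank⟩ := mem_filter.1 hx
  obtain ⟨i, hi, hxi⟩ := mem_biUnion.1 hxA
  rwa [eq_of_mem_Ico_blockStart hrank (h.rankIn_mem_Ico (mem_range.1 hi) hxi)]

end IsOrderedBlocks

lemma isOrderedBlocks_block {A : Finset ℕ} {n : ℕ} (hA : blockStart n ≤ #A) :
    IsOrderedBlocks n (block A) := by
  refine ⟨fun t ht => ?_, fun {i j} hij _ x hx y hy => ?_⟩
  · have hle : blockStart (t + 1) ≤ #A := (blockStart_strictMono.monotone ht).trans hA
    have himage : (block A t).image (rankIn A) = Ico (blockStart t) (blockStart (t + 1)) := ?_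
    · rw [← card_image_of_injOn (s := block A t) ((rankIn_injOn A).mono (filter_subset _ _)),
        himage, Nat.card_Ico, blockStart_succ]
      omega
    ext r
    simp only [block, mem_image, mem_filter]
    constructor
    · rintro ⟨x, ⟨-, hr⟩, rfl⟩
      exact hr
    · intro hr
      have hrA : r ∈ A.image (rankIn A) := by
        rw [image_rankIn]; exact mem_range.2 ((mem_Ico.1 hr).2.trans_le hle)
      obtain ⟨x, hx, rfl⟩ := mem_image.1 hrA
      exact ⟨x, ⟨hx, hr⟩, rfl⟩
  · by_contra hyx
    have h1 := rankIn_mono A (not_lt.1 hyx)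
    have h2 := blockStart_strictMono.monotone (show i + 1 ≤ j by omega)
    have := mem_Ico.1 (mem_filter.1 hx).2
    have := mem_Ico.1 (mem_filter.1 hy).2
    omega

-- Cell `x` of row `r` is the position `T (r - 1) + x`. Reading the row off `max G` makes every
-- sub-block of `G` that contains `max G` encode cells of the same row.
def blockCells (G : Finset ℕ) : Finset ℕ :=
  (G.erase (G.sup id)).image (T (G.sup id - 1) + ·)

def blockTriangleSet (k : ℕ) (A : Finset ℕ) : Finset ℕ :=
  univ.biUnion fun t : Fin k => blockCells (block A t)

lemma sup_id_mem {G : Finset ℕ} (hG : G.Nonempty) : G.sup id ∈ G := by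
  obtain ⟨x, hx, h⟩ := exists_mem_eq_sup G hG id
  rwa [h]

lemma card_blockCells {G : Finset ℕ} (hG : G.Nonempty) : #(blockCells G) = #G - 1 := by
  rw [blockCells, card_image_of_injective _ (add_right_injective _),
    card_erase_of_mem (sup_id_mem hG)]

lemma blockCells_subset {G : Finset ℕ} (hG : ∀ x ∈ G, 0 < x) :
    blockCells G ⊆ Ioc (T (G.sup id - 1)) (T (G.sup id)) := by
  intro p hp
  obtain ⟨x, hx, rfl⟩ := mem_image.1 hp
  have hx0 := hG x (mem_of_mem_erase hx)
  have hxr : x ≤ G.sup id := le_sup (f := id) (mem_of_mem_erase hx)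
  have hT := T_succ (G.sup id - 1)
  rw [Nat.sub_add_cancel (by omega)] at hT
  rw [mem_Ioc]
  omega

lemma exists_subset_blockCells_eq {G C : Finset ℕ} (hG : G.Nonempty) (hC : C ⊆ blockCells G) :
    ∃ G' ⊆ G, #G' = #C + 1 ∧ blockCells G' = C := by
  obtain ⟨B, hB, rfl⟩ := subset_image_iff.1 hC
  have hr : G.sup id ∉ B := fun h => notMem_erase _ _ (hB h)
  have hsup : (insert (G.sup id) B).sup id = G.sup id := by
    rw [sup_insert]
    exact sup_eq_left.2 (sup_mono (hB.trans (erase_subset _ _)))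
  refine ⟨insert (G.sup id) B, insert_subset (sup_id_mem hG) (hB.trans (erase_subset _ _)), ?_, ?_⟩
  · rw [card_insert_of_notMem hr, card_image_of_injective _ (add_right_injective _)]
  · rw [blockCells, hsup, erase_insert hr]

namespace IsOrderedBlocks

variable {m n : ℕ} {H : ℕ → Finset ℕ}

lemma nonempty (h : IsOrderedBlocks n H) {j : ℕ} (hj : j < n) : (H j).Nonempty :=
  card_pos.1 (by rw [h.card_eq j hj]; omega)

lemma exists_BTri (h : IsOrderedBlocks n H) (hH : ∀ j < n, ∀ x ∈ H j, 0 < x ∧ x ≤ m) :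
    ∃ Z : BTri m n, ∀ j, Z.cells j = blockCells (H j) := by
  have hrow (j : Fin n) := hH j j.2 _ (sup_id_mem (h.nonempty j.2))
  refine ⟨⟨fun j => (H j).sup id, fun i j hij => ?_, fun j => (hrow j).1, fun j => (hrow j).2,
    fun j => blockCells (H j), fun j => ?_,
    fun j => blockCells_subset fun x hx => (hH j j.2 x hx).1⟩, fun _ => rfl⟩
  · exact h.lt_of_lt hij j.2 _ (sup_id_mem (h.nonempty i.2)) _ (sup_id_mem (h.nonempty j.2))
  · rw [card_blockCells (h.nonempty j.2), h.card_eq j j.2]; rfl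

lemma exists_blockTriangleSet_eq (h : IsOrderedBlocks n H) {Z : BTri m n}
    (hZ : ∀ j, Z.cells j = blockCells (H j)) {k : ℕ} {S : BTri m k} (hS : S.le Z) :
    ∃ A ⊆ (range n).biUnion H, #A = blockStart k ∧ blockTriangleSet k A = S.toSet := by
  obtain ⟨e, he, hsub⟩ := hS
  choose G hGH hGcard hGcells using fun t =>
    exists_subset_blockCells_eq (h.nonempty (e t).2) ((hZ (e t)) ▸ hsub t)
  let G' : ℕ → Finset ℕ := fun t => if ht : t < k then G ⟨t, ht⟩ else ∅
  have hG' (t : Fin k) : G' t = G t := dif_pos t.2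
  have hord : IsOrderedBlocks k G' := by
    refine ⟨fun t ht => ?_, fun {i j} hij hj x hx y hy => ?_⟩
    · rw [hG' ⟨t, ht⟩, hGcard, S.card_cells]
    · rw [hG' ⟨i, hij.trans hj⟩] at hx
      rw [hG' ⟨j, hj⟩] at hy
      exact h.lt_of_lt (he (show (⟨i, hij.trans hj⟩ : Fin k) < ⟨j, hj⟩ from hij)) (e _).2
        x (hGH _ hx) y (hGH _ hy)
  refine ⟨(range k).biUnion G', fun x hx => ?_, hord.card_biUnion, ?_⟩
  · obtain ⟨t, ht, hxt⟩ := mem_biUnion.1 hx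
    rw [hG' ⟨t, mem_range.1 ht⟩] at hxt
    exact mem_biUnion.2 ⟨_, mem_range.2 (e _).2, hGH _ hxt⟩
  · refine biUnion_congr rfl fun t _ => ?_
    rw [hord.block_biUnion t.2, hG', hGcells]

end IsOrderedBlocks

theorem exists_boardArrows (n k : ℕ) : ∃ m, n ≤ m ∧ BoardArrows m n k := by
  obtain ⟨N, hN⟩ := exists_isHomogeneous Bool (blockStart k) (blockStart n)
  refine ⟨N + n, by omega, fun χ => ?_⟩
  obtain ⟨W, hWV, hWcard, hW⟩ := hN (fun A => χ (blockTriangleSet k A)) (Icc 1 (N + n)) (by simp)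
  have hblocks := isOrderedBlocks_block hWcard
  obtain ⟨Z, hZ⟩ := hblocks.exists_BTri (m := N + n) fun j _ x hx => by
    have := mem_Icc.1 (hWV (mem_filter.1 hx).1)
    omega
  have hsame : ∀ S S' : BTri (N + n) k, S.le Z → S'.le Z → χ S.toSet = χ S'.toSet := by
    intro S S' hS hS'
    have hW' : (range n).biUnion (block W) ⊆ W := biUnion_subset.2 fun _ _ => filter_subset _ _
    obtain ⟨A, hAW, hAcard, hA⟩ := hblocks.exists_blockTriangleSet_eq hZ hS
    obtain ⟨A', hA'W, hA'card, hA'⟩ := hblocks.exists_blockTriangleSet_eq hZ hS'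
    rw [← hA, ← hA']
    exact hW A (hAW.trans hW') A' (hA'W.trans hW') hAcard hA'card
  by_cases hS : ∃ S : BTri (N + n) k, S.le Z
  · obtain ⟨S₀, hS₀⟩ := hS
    cases hc : χ S₀.toSet
    · exact Or.inr ⟨Z, fun S hSZ => (hsame S S₀ hSZ hS₀).trans hc⟩
    · exact Or.inl ⟨Z, fun S hSZ => (hsame S S₀ hSZ hS₀).trans hc⟩
  · exact Or.inl ⟨Z, fun S hSZ => absurd ⟨S, hSZ⟩ hS⟩

theorem boardArrows_R1 (n k : ℕ) : BoardArrows (R1 n n k) n k := by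
  obtain ⟨m, hnm, hm⟩ := exists_boardArrows n k
  exact (Nat.sInf_mem (s := {m | max n n ≤ m ∧ BoardArrows m n k}) ⟨m, by simpa using hnm, hm⟩).2

theorem Nat.pow_le_pow_mul_choose {n k : ℕ} (hkn : k ≤ n) : n ^ k ≤ k ^ k * n.choose k := by
  refine Nat.le_of_mul_le_mul_right ?_ k.factorial_pos
  calc n ^ k * k ! = ∏ i ∈ range k, n * (k - i) := by
        rw [← Nat.descFactorial_self, Nat.descFactorial_eq_prod_range, prod_mul_distrib,
          prod_const, card_range]
    _ ≤ ∏ i ∈ range k, k * (n - i) := prod_le_prod' fun i _ => by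
        rw [Nat.mul_sub, Nat.mul_sub, mul_comm n k]
        exact Nat.sub_le_sub_left (Nat.mul_le_mul_right i hkn) _
    _ = k ^ k * n.choose k * k ! := by
        rw [prod_mul_distrib, prod_const, card_range, ← Nat.descFactorial_eq_prod_range,
          Nat.descFactorial_eq_factorial_mul_choose, mul_comm k !, mul_assoc]

theorem div_pow_le_choose {n k : ℕ} (hkn : k ≤ n) : ((n : ℝ) / k) ^ k ≤ n.choose k := by
  rw [div_pow, div_le_iff₀ (by exact_mod_cast Nat.pow_self_pos)]
  exact_mod_cast (Nat.pow_le_pow_mul_choose hkn).trans_eq (mul_comm _ _)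

lemma T_lt_sq_div_two (m : ℕ) : (T m : ℝ) < ((m : ℝ) + 1) ^ 2 / 2 := by
  have h : (T m : ℝ) * 2 = m * (m + 1) := by exact_mod_cast T_mul_two m
  nlinarith

lemma choose_T_mul_factorial_lt (m : ℕ) {t : ℕ} (ht : t ≠ 0) :
    ((T m).choose t : ℝ) * t ! < (((m : ℝ) + 1) ^ 2 / 2) ^ t := by
  have hfac : (0 : ℝ) < t ! := by exact_mod_cast t.factorial_pos
  calc ((T m).choose t : ℝ) * t ! ≤ (T m : ℝ) ^ t :=
        (le_div_iff₀ hfac).1 (Nat.choose_le_pow_div t (T m))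
    _ < _ := pow_lt_pow_left₀ (T_lt_sq_div_two m) (Nat.cast_nonneg _) ht

theorem lower_bound_of_two_pow_le_choose {m n k : ℕ} (ht : T n ≠ 0) (hkn : k ≤ n)
    (h : 2 ^ (n.choose k - 1) ≤ (T m).choose (T n)) :
    √(2 * π * T n) * ((T n : ℝ) / exp 1) ^ T n * (2 : ℝ) ^ (((n : ℝ) / k) ^ k + T n - 1) <
      ((m : ℝ) + 1) ^ (2 * T n) := by
  have hpow : (2 : ℝ) ^ (((n : ℝ) / k) ^ k - 1) ≤ (T m).choose (T n) := calc
    (2 : ℝ) ^ (((n : ℝ) / k) ^ k - 1) ≤ (2 : ℝ) ^ ((n.choose k - 1 : ℕ) : ℝ) := by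
        gcongr
        · norm_num
        · rw [Nat.cast_sub (Nat.choose_pos hkn), Nat.cast_one]
          linarith [div_pow_le_choose (n := n) hkn]
    _ ≤ _ := by rw [Real.rpow_natCast]; exact_mod_cast h
  calc √(2 * π * T n) * ((T n : ℝ) / exp 1) ^ T n * (2 : ℝ) ^ (((n : ℝ) / k) ^ k + T n - 1)
      = √(2 * π * T n) * ((T n : ℝ) / exp 1) ^ T n * (2 : ℝ) ^ (((n : ℝ) / k) ^ k - 1) *
          2 ^ T n := by
        rw [mul_assoc _ _ ((2 : ℝ) ^ T n), ← Real.rpow_natCast 2 (T n), ← Real.rpow_add two_pos]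
        ring_nf
    _ ≤ (T n) ! * (T m).choose (T n) * 2 ^ T n := by
        gcongr
        exact Stirling.le_factorial_stirling _
    _ < (((m : ℝ) + 1) ^ 2 / 2) ^ T n * 2 ^ T n := by
        rw [mul_comm ((T n) ! : ℝ)]
        gcongr
        exact choose_T_mul_factorial_lt m ht
    _ = ((m : ℝ) + 1) ^ (2 * T n) := by
        rw [← mul_pow, div_mul_cancel₀ _ two_ne_zero, pow_mul]

lemma rpow_mul_sqrt_mul_rpow_pow_two_mul (t : ℕ) (ht : t ≠ 0) (a : ℝ) :
    ((2 * π * t) ^ ((1 : ℝ) / (4 * t)) * √(2 * t / exp 1) * (2 : ℝ) ^ ((a - 1) / (2 * t))) ^ (2 * t)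
      = √(2 * π * t) * ((t : ℝ) / exp 1) ^ t * (2 : ℝ) ^ (a + t - 1) := by
  have ht' : (t : ℝ) ≠ 0 := by exact_mod_cast ht
  rw [mul_pow, mul_pow, ← Real.rpow_natCast, ← Real.rpow_natCast (2 ^ _),
    ← Real.rpow_mul (by positivity), ← Real.rpow_mul (by norm_num), pow_mul,
    Real.sq_sqrt (by positivity), Real.sqrt_eq_rpow]
  have e1 : 1 / (4 * (t : ℝ)) * ((2 * t : ℕ) : ℝ) = 1 / 2 := by push_cast; field_simp; ring
  have e2 : (a - 1) / (2 * t) * ((2 * t : ℕ) : ℝ) = a - 1 := by push_cast; field_simp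
  rw [e1, e2, mul_div_assoc, mul_pow, show a + t - 1 = (a - 1) + t by ring,
    Real.rpow_add two_pos, Real.rpow_natCast]
  ring

/-- Asymptotic lower bound for the diagonal triangular Ramsey number `m = R₁(n, n, k)`:
`(m+1)^{2T_n} ≥ √(2πT_n)·(T_n/e)^{T_n}·2^{(n/k)^k + T_n - 1}`, and hence
`m > (2πT_n)^{1/(4T_n)}·√(2T_n/e)·2^{(n^k - k^k)/(2k^k T_n)} - 1`. -/
theorem R1_diagonal_lower_bound (n k : ℕ) (hk : 1 ≤ k) (hkn : k ≤ n) :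
    ((R1 n n k : ℝ) + 1) ^ (2 * T n) ≥
      Real.sqrt (2 * Real.pi * (T n : ℝ)) * ((T n : ℝ) / Real.exp 1) ^ (T n) *
        (2 : ℝ) ^ (((n : ℝ) / (k : ℝ)) ^ k + (T n : ℝ) - 1) ∧
    (R1 n n k : ℝ) >
      (2 * Real.pi * (T n : ℝ)) ^ ((1 : ℝ) / (4 * (T n : ℝ))) *
        Real.sqrt (2 * (T n : ℝ) / Real.exp 1) *
        (2 : ℝ) ^ ((((n : ℝ) ^ k - (k : ℝ) ^ k)) / (2 * (k : ℝ) ^ k * (T n : ℝ))) - 1 := by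
  have hTn : T n ≠ 0 := (T_pos (hk.trans hkn)).ne'
  have hX := lower_bound_of_two_pow_le_choose hTn hkn
    ((boardArrows_R1 n k).two_pow_choose_pred_le_choose hkn)
  refine ⟨hX.le, ?_⟩
  have hexp : ((n : ℝ) ^ k - (k : ℝ) ^ k) / (2 * (k : ℝ) ^ k * T n) =
      (((n : ℝ) / k) ^ k - 1) / (2 * T n) := by
    have : (k : ℝ) ^ k ≠ 0 := by positivity
    rw [div_pow]
    field_simp
  rw [hexp, gt_iff_lt, sub_lt_iff_lt_add]
  refine lt_of_pow_lt_pow_left₀ (2 * T n) (by positivity) ?_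
  rwa [rpow_mul_sqrt_mul_rpow_pow_two_mul (T n) hTn]
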